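/- Every pure Nash equilibrium of the stable matching game is strict: if α* is a pure Nash equilibrium, then for every man m and every pure strategy α_m ≠ α*_m, u_m(α_m, α*_{−m}) < u_m(α*_m, α*_{−m}). -/

import Mathlib

/-! At a pure profile a man's payoff is `μ_{m, a m}` if no man preferred by `a m` proposes to
her, and `0` otherwise. By pigeonhole some woman would accept `m`, so at an equilibrium his
payoff is positive and he is accepted; a deviation then earns either `0` or a different
`μ_{mw}` (no ties) that is at most the equilibrium one. -/

open Finset Real MeasureTheory

namespace SM

variable {n : ℕ}

/-- The set of men that woman `w` strictly prefers to man `m`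
(`rankW w k` is woman `w`'s cardinal ranking score of man `k`;
`k >_w m` iff `rankW w m < rankW w k`). -/
noncomputable def better (rankW : Fin n → Fin n → ℝ) (w m : Fin n) : Finset (Fin n) :=
  Finset.univ.filter fun k => rankW w m < rankW w k

/-- Market assumptions: men's cardinal preferences lie in `(0,1]` with no ties, and each
woman's ranking of the men is strict (injective scores). -/
def MarketHyp (μp rankW : Fin n → Fin n → ℝ) : Prop :=
  (∀ m w, μp m w ∈ Set.Ioc (0:ℝ) 1) ∧
  (∀ m w w', w ≠ w' → μp m w ≠ μp m w') ∧
  (∀ w, Function.Injective (rankW w))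

/-- `v_{mw}(x) = μ_{mw} ∏_{k >_w m} (1 - x_{kw})`. -/
noncomputable def vv (μp rankW : Fin n → Fin n → ℝ) (x : Fin n → Fin n → ℝ) (m w : Fin n) : ℝ :=
  μp m w * ∏ k ∈ better rankW w m, (1 - x k w)

/-- Payoff `u_m(x) = ∑_w v_{mw}(x) x_{mw}` of man `m` in the stable matching game. -/
noncomputable def uu (μp rankW : Fin n → Fin n → ℝ) (x : Fin n → Fin n → ℝ) (m : Fin n) : ℝ :=
  ∑ w, vv μp rankW x m w * x m w

/-- Mixed strategy: a probability vector over the women. -/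
def IsStrategy (y : Fin n → ℝ) : Prop := (∀ w, 0 ≤ y w) ∧ ∑ w, y w = 1

/-- Pure strategy: the indicator vector of a single woman. -/
def IsPure (y : Fin n → ℝ) : Prop := ∃ w₀, y = fun w => if w = w₀ then (1:ℝ) else 0

/-- (Mixed) Nash equilibrium of the stable matching game. -/
def IsNE (μp rankW : Fin n → Fin n → ℝ) (x : Fin n → Fin n → ℝ) : Prop :=
  (∀ m, IsStrategy (x m)) ∧
  ∀ m y, IsStrategy y → uu μp rankW (Function.update x m y) m ≤ uu μp rankW x m

/-- Pure Nash equilibrium of the stable matching game. -/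
def IsPureNE (μp rankW : Fin n → Fin n → ℝ) (x : Fin n → Fin n → ℝ) : Prop :=
  (∀ m, IsPure (x m)) ∧
  ∀ m y, IsPure y → uu μp rankW (Function.update x m y) m ≤ uu μp rankW x m

/-- Characteristic vector of the perfect matching `σ`. -/
def charVec (σ : Equiv.Perm (Fin n)) : Fin n → Fin n → ℝ :=
  fun m w => if w = σ m then 1 else 0

/-- A perfect matching `σ` is stable iff it admits no blocking pair `(m, σ m')`. -/
def IsStableMatching (μp rankW : Fin n → Fin n → ℝ) (σ : Equiv.Perm (Fin n)) : Prop :=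
  ¬ ∃ m m' : Fin n, m ≠ m' ∧ μp m (σ m) < μp m (σ m') ∧ rankW (σ m') m' < rankW (σ m') m

/-- `Δ = min_{m, w ≠ w'} |μ_{mw} - μ_{mw'}|`. -/
noncomputable def gapDelta (μp : Fin n → Fin n → ℝ) : ℝ :=
  sInf {d : ℝ | ∃ m w w' : Fin n, w ≠ w' ∧ d = |μp m w - μp m w'|}

/-- `μ_min = min_{m,w} μ_{mw}`. -/
noncomputable def muMin (μp : Fin n → Fin n → ℝ) : ℝ :=
  sInf {a : ℝ | ∃ m w : Fin n, a = μp m w}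

/-- `μ_max = max_{m,w} μ_{mw}`. -/
noncomputable def muMax (μp : Fin n → Fin n → ℝ) : ℝ :=
  sSup {a : ℝ | ∃ m w : Fin n, a = μp m w}

/-- Entrywise ℓ¹ distance on strategy profiles. -/
noncomputable def l1dist (x y : Fin n → Fin n → ℝ) : ℝ :=
  ∑ m, ∑ w, |x m w - y m w|

/-- The logit (exponential-weights) map. -/
noncomputable def logit (η : ℝ) (L : Fin n → ℝ) (w : Fin n) : ℝ :=
  Real.exp (η * L w) / ∑ w', Real.exp (η * L w')

/-- The strategy profile of indicator vectors associated with the action profile `a`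
(man `m` proposes to woman `a m`). -/
def pureProfile (a : Fin n → Fin n) : Fin n → Fin n → ℝ := fun m w => if w = a m then 1 else 0

/-- Payoff of man `m` at the pure action profile `a`. -/
noncomputable def uP (μp rankW : Fin n → Fin n → ℝ) (a : Fin n → Fin n) (m : Fin n) : ℝ :=
  uu μp rankW (pureProfile a) m

/-- Man `m` is playing a (pure) best response at the action profile `a`. -/
def IsBR (μp rankW : Fin n → Fin n → ℝ) (a : Fin n → Fin n) (m : Fin n) : Prop :=
  ∀ w : Fin n, uP μp rankW (Function.update a m w) m ≤ uP μp rankW a m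

/-- Pure Nash equilibrium of the pure-action stable matching game. -/
def IsPureNEAction (μp rankW : Fin n → Fin n → ℝ) (a : Fin n → Fin n) : Prop :=
  ∀ m, IsBR μp rankW a m

/-- Man `m` is matched at `a`: no man more preferred by woman `a m` also proposes to her. -/
def MatchedIn (rankW : Fin n → Fin n → ℝ) (a : Fin n → Fin n) (m : Fin n) : Prop :=
  ∀ k ∈ better rankW (a m) m, a k ≠ a m

/-- Good state: every matched man is at his best response. -/
def GoodState (μp rankW : Fin n → Fin n → ℝ) (a : Fin n → Fin n) : Prop :=
  ∀ m, MatchedIn rankW a m → IsBR μp rankW a m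

lemma notMem_better (rankW : Fin n → Fin n → ℝ) (w m : Fin n) : m ∉ better rankW w m := by
  simp [better]

section Payoff

variable (μp : Fin n → Fin n → ℝ) {rankW : Fin n → Fin n → ℝ} {a : Fin n → Fin n} {m : Fin n}

lemma uP_eq_vv : uP μp rankW a m = vv μp rankW (pureProfile a) m (a m) := by
  unfold uP uu
  rw [Finset.sum_eq_single (a m) (fun w _ hw => by simp [pureProfile, hw]) (by simp)]
  simp [pureProfile]

lemma uP_of_matchedIn (h : MatchedIn rankW a m) : uP μp rankW a m = μp m (a m) := by
  rw [uP_eq_vv, vv, Finset.prod_eq_one, mul_one]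
  intro k hk
  simp [pureProfile, Ne.symm (h k hk)]

lemma uP_of_not_matchedIn (h : ¬MatchedIn rankW a m) : uP μp rankW a m = 0 := by
  obtain ⟨k, hk, hak⟩ : ∃ k ∈ better rankW (a m) m, a k = a m := by
    simpa [MatchedIn] using h
  rw [uP_eq_vv, vv, Finset.prod_eq_zero hk (by simp [pureProfile, hak]), mul_zero]

end Payoff

lemma matchedIn_update_self_iff (rankW : Fin n → Fin n → ℝ) (a : Fin n → Fin n) (m w : Fin n) :
    MatchedIn rankW (Function.update a m w) m ↔ ∀ k ∈ better rankW w m, a k ≠ w := by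
  unfold MatchedIn
  rw [Function.update_self]
  refine forall₂_congr fun k hk => ?_
  have hkm : k ≠ m := fun e => notMem_better rankW w m (e ▸ hk)
  rw [Function.update_of_ne hkm]

/-- If every woman rejected `m`, choosing for each woman a man she prefers to `m` who proposes
to her would inject the women into the other men. -/
lemma exists_matchedIn_update (rankW : Fin n → Fin n → ℝ) (a : Fin n → Fin n) (m : Fin n) :
    ∃ w, MatchedIn rankW (Function.update a m w) m := by
  simp_rw [matchedIn_update_self_iff]
  by_contra! hrejected
  choose rival hrival_mem hrival_proposes using hrejected
  have hinj : Function.Injective rival := fun w₁ w₂ h => by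
    rw [← hrival_proposes w₁, ← hrival_proposes w₂, h]
  obtain ⟨w, hw⟩ := Finite.surjective_of_injective hinj m
  exact notMem_better rankW w m (hw ▸ hrival_mem w)

/-- every pure Nash equilibrium of the stable matching game is strict. -/
theorem pure_NE_strict {n : ℕ} (μp rankW : Fin n → Fin n → ℝ)
    (hM : MarketHyp μp rankW)
    (a : Fin n → Fin n) (hNE : IsPureNEAction μp rankW a) :
    ∀ m w : Fin n, w ≠ a m →
      uP μp rankW (Function.update a m w) m < uP μp rankW a m := by
  intro m w hw
  have hpos : ∀ w, 0 < μp m w := fun w => (hM.1 m w).1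
  have hmatched : MatchedIn rankW a m := by
    by_contra hunmatched
    obtain ⟨w₀, hw₀⟩ := exists_matchedIn_update rankW a m
    have hdev := hNE m w₀
    rw [uP_of_matchedIn μp hw₀, uP_of_not_matchedIn μp hunmatched, Function.update_self] at hdev
    exact (hpos w₀).not_ge hdev
  rw [uP_of_matchedIn μp hmatched]
  by_cases hw_matched : MatchedIn rankW (Function.update a m w) m
  · have hdev := hNE m w
    rw [uP_of_matchedIn μp hmatched] at hdev
    rw [uP_of_matchedIn μp hw_matched, Function.update_self] at hdev ⊢
    exact hdev.lt_of_ne (hM.2.1 m w (a m) hw)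
  · rw [uP_of_not_matchedIn μp hw_matched]
    exact hpos (a m)

end SM
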